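/- Let n ≥ 2, let d_1*, …, d_n* be pairwise distinct reals in [−d, d] with minimal gap d_min* and a_1*, …, a_n* real with |a_j*| ≥ m > 0. Let D be the ((s−1)/2 + 1)×n matrix with entries (d_j*)^(i−1) for an odd integer s ≥ 2n+1, and let A = diag(a_1*, …, a_n*). Then the n-th largest singular value σ_n of D·A·Dᵀ satisfies σ_n ≥ m·ζ(n)²·(d_min*)^(2n−2) / (n·(1+d)^(2n−2)), where ζ(n) = (n/2)!·((n−2)/2)! for even n and (((n−1)/2)!)² for odd n. -/

import Mathlib

open Matrix

/-- ζ(n) = (n/2)!·((n-2)/2)! for even n and (((n-1)/2)!)² for odd n. -/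
noncomputable def paperZeta (n : ℕ) : ℝ :=
  if Even n then (Nat.factorial (n / 2) : ℝ) * (Nat.factorial ((n - 2) / 2) : ℝ)
  else ((Nat.factorial ((n - 1) / 2) : ℝ)) ^ 2

/-- The `((s-1)/2 + 1) × n` Vandermonde matrix `D` with entries `(d*_j)^(i-1)`. -/
noncomputable def vandD (s n : ℕ) (dstar : Fin n → ℝ) :
    Matrix (Fin ((s - 1) / 2 + 1)) (Fin n) ℝ :=
  Matrix.of fun i j => dstar j ^ (i : ℕ)

/-!
Since `ker Dᵀ ⊆ ker (D A Dᵀ)`, a unit vector `x` orthogonal to `ker (D A Dᵀ)` lies in the range of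
`D`, say `x = D c`. Then `⟪Dᵀ x, c⟫ = ‖x‖² = 1` together with `σ_min(D)² ‖c‖² ≤ ‖D c‖² = 1` gives
`‖Dᵀ x‖² ≥ σ_min(D)²`, and so `‖D A Dᵀ x‖ ≥ σ_min(D) · m · ‖Dᵀ x‖ ≥ m σ_min(D)²`.

The lower bound on `σ_min(D)` is by interpolation: the coefficients of `∏_{i ≠ k} (X - d_i)` have
`ℓ¹`-norm at most `(1 + d)^(n-1)` and pair with `D c` to give `c_k ∏_{i ≠ k} (d_k - d_i)`, while
`∏_{i ≠ k} |d_k - d_i| ≥ ζ(n) d_min^(n-1)` because the `j`-th nearest node on either side of `d_k`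
is at distance at least `j · d_min`.
-/

open Polynomial Finset
open scoped Nat

theorem Nat.factorial_div_two_mul_factorial_le {p q N : ℕ} (h : p + q = N) :
    (N / 2)! * (N - N / 2)! ≤ p ! * q ! := by
  have hp : p ≤ N := by omega
  refine Nat.le_of_mul_le_mul_left ?_ (Nat.choose_pos (Nat.div_le_self N 2))
  calc N.choose (N / 2) * ((N / 2)! * (N - N / 2)!)
      = N ! := by rw [← mul_assoc, Nat.choose_mul_factorial_mul_factorial (Nat.div_le_self N 2)]
    _ = N.choose p * (p ! * q !) := by
        rw [← mul_assoc, ← Nat.choose_mul_factorial_mul_factorial hp, show N - p = q by omega]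
    _ ≤ N.choose (N / 2) * (p ! * q !) := Nat.mul_le_mul_right _ (Nat.choose_le_middle p N)

theorem paperZeta_eq_factorial_mul_factorial (n : ℕ) :
    paperZeta n = ((n - 1) / 2)! * ((n - 1) - (n - 1) / 2)! := by
  unfold paperZeta
  split_ifs with he
  · obtain ⟨k, rfl⟩ := he
    rcases Nat.eq_zero_or_pos k with rfl | hk
    · simp
    rw [show (k + k) / 2 = k by omega, show (k + k - 2) / 2 = k - 1 by omega,
      show (k + k - 1) / 2 = k - 1 by omega, show k + k - 1 - (k - 1) = k by omega, mul_comm]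
  · obtain ⟨k, rfl⟩ := Nat.not_even_iff_odd.mp he
    rw [show (2 * k + 1 - 1) / 2 = k by omega, show 2 * k + 1 - 1 - k = k by omega]
    ring

theorem paperZeta_pos (n : ℕ) : 0 < paperZeta n := by
  rw [paperZeta_eq_factorial_mul_factorial]
  positivity

section SeparatedPoints

variable {δ : ℝ}

theorem card_mul_le_sub_of_separated {a : ℝ} (S : Finset ℝ) (hlo : ∀ x ∈ S, a ≤ x) {y : ℝ}
    (hlt : ∀ x ∈ S, x < y) (hay : a ≤ y)
    (hsep : (insert y S : Set ℝ).Pairwise fun u v => δ ≤ |u - v|) :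
    S.card * δ ≤ y - a := by
  induction S using Finset.induction_on_max generalizing y with
  | empty => simpa using hay
  | insert b s hb ih =>
    have hbs : b ∉ s := fun h => lt_irrefl b (hb b h)
    have hby : b < y := hlt b (mem_insert_self b s)
    have hs : s.card * δ ≤ b - a :=
      ih (fun x hx => hlo x (mem_insert_of_mem hx)) hb (hlo b (mem_insert_self b s))
        (hsep.mono (by push_cast; exact Set.subset_insert _ _))
    have hgap : δ ≤ |y - b| :=
      hsep (Set.mem_insert y _) (by simp) hby.ne'
    rw [abs_of_pos (sub_pos.mpr hby)] at hgap
    rw [card_insert_of_notMem hbs]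
    push_cast
    linarith

theorem factorial_mul_pow_le_prod_sub_of_separated (hδ : 0 ≤ δ) (S : Finset ℝ) {y : ℝ}
    (hlt : ∀ x ∈ S, x < y) (hsep : (insert y S : Set ℝ).Pairwise fun u v => δ ≤ |u - v|) :
    (S.card ! : ℝ) * δ ^ S.card ≤ ∏ x ∈ S, (y - x) := by
  induction S using Finset.induction_on_min with
  | empty => simp
  | insert a s ha ih =>
    have has : a ∉ s := fun h => lt_irrefl a (ha a h)
    have hay : a < y := hlt a (mem_insert_self a s)
    have hfar : ((s.card + 1 : ℕ) : ℝ) * δ ≤ y - a := by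
      simpa [card_insert_of_notMem has] using
        card_mul_le_sub_of_separated (insert a s) (by simpa using fun x hx => (ha x hx).le)
          hlt hay.le hsep
    have hs : (s.card ! : ℝ) * δ ^ s.card ≤ ∏ x ∈ s, (y - x) :=
      ih (fun x hx => hlt x (mem_insert_of_mem hx))
        (hsep.mono (by push_cast; exact Set.insert_subset_insert (Set.subset_insert _ _)))
    rw [card_insert_of_notMem has, prod_insert has, Nat.factorial_succ, pow_succ]
    push_cast
    calc ((s.card + 1) * s.card ! : ℝ) * (δ ^ s.card * δ)
        = ((s.card + 1 : ℕ) * δ) * (s.card ! * δ ^ s.card) := by push_cast; ring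
      _ ≤ (y - a) * ∏ x ∈ s, (y - x) :=
        mul_le_mul hfar hs (by positivity) (sub_pos.mpr hay).le

theorem factorial_mul_pow_le_prod_sub_of_separated' (hδ : 0 ≤ δ) (S : Finset ℝ) {y : ℝ}
    (hgt : ∀ x ∈ S, y < x) (hsep : (insert y S : Set ℝ).Pairwise fun u v => δ ≤ |u - v|) :
    (S.card ! : ℝ) * δ ^ S.card ≤ ∏ x ∈ S, (x - y) := by
  have hneg := factorial_mul_pow_le_prod_sub_of_separated hδ (S.map (Equiv.neg ℝ).toEmbedding)
    (y := -y) (fun x hx => by obtain ⟨z, hz, rfl⟩ := mem_map.mp hx; simpa using hgt z hz) (by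
      have hmem : ∀ w ∈ (insert (-y) (S.map (Equiv.neg ℝ).toEmbedding) : Set ℝ),
          -w ∈ (insert y S : Set ℝ) := by
        intro w hw
        simp only [coe_map, Set.mem_insert_iff, Set.mem_image, mem_coe,
          Equiv.coe_toEmbedding, Equiv.neg_apply] at hw
        rcases hw with rfl | ⟨x, hx, rfl⟩ <;> simp_all
      intro u hu v hv huv
      have h : δ ≤ |-u - -v| := hsep (hmem u hu) (hmem v hv) (neg_injective.ne huv)
      rwa [neg_sub_neg, abs_sub_comm] at h)
  simpa [prod_map, sub_eq_add_neg, add_comm] using hneg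

theorem paperZeta_mul_pow_le_prod_abs_sub_of_separated (hδ : 0 ≤ δ) (V : Finset ℝ)
    (hsep : (V : Set ℝ).Pairwise fun u v => δ ≤ |u - v|) {y : ℝ} (hy : y ∈ V) :
    paperZeta V.card * δ ^ (V.card - 1) ≤ ∏ x ∈ V.erase y, |y - x| := by
  set L := (V.erase y).filter (· < y)
  set R := (V.erase y).filter fun x => ¬x < y
  have hsub : ∀ T ⊆ V.erase y, (insert y T : Set ℝ) ⊆ V := fun T hT =>
    Set.insert_subset hy (coe_subset.mpr (hT.trans (erase_subset y V)))
  have hL : (L.card ! : ℝ) * δ ^ L.card ≤ ∏ x ∈ L, |y - x| := by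
    rw [prod_congr rfl fun x hx => abs_of_pos (sub_pos.mpr (mem_filter.mp hx).2)]
    exact factorial_mul_pow_le_prod_sub_of_separated hδ L (fun x hx => (mem_filter.mp hx).2)
      (hsep.mono (hsub L (filter_subset _ _)))
  have hgt : ∀ x ∈ R, y < x := fun x hx => by
    obtain ⟨hxV, hxy⟩ := mem_filter.mp hx
    exact lt_of_le_of_ne (not_lt.mp hxy) (ne_of_mem_erase hxV).symm
  have hR : (R.card ! : ℝ) * δ ^ R.card ≤ ∏ x ∈ R, |y - x| := by
    rw [prod_congr rfl fun x hx => by rw [abs_sub_comm, abs_of_pos (sub_pos.mpr (hgt x hx))]]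
    exact factorial_mul_pow_le_prod_sub_of_separated' hδ R hgt
      (hsep.mono (hsub R (filter_subset _ _)))
  have hcard : L.card + R.card = V.card - 1 := by
    rw [card_filter_add_card_filter_not, card_erase_of_mem hy]
  have hζ : paperZeta V.card ≤ L.card ! * R.card ! := by
    rw [paperZeta_eq_factorial_mul_factorial]
    exact_mod_cast Nat.factorial_div_two_mul_factorial_le hcard
  calc paperZeta V.card * δ ^ (V.card - 1)
      ≤ (L.card ! * R.card !) * δ ^ (L.card + R.card) := by rw [hcard]; gcongr
    _ = (L.card ! * δ ^ L.card) * (R.card ! * δ ^ R.card) := by ring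
    _ ≤ (∏ x ∈ L, |y - x|) * ∏ x ∈ R, |y - x| :=
        mul_le_mul hL hR (by positivity) ((by positivity : (0 : ℝ) ≤ _).trans hL)
    _ = ∏ x ∈ V.erase y, |y - x| := prod_filter_mul_prod_filter_not _ _ _

theorem paperZeta_mul_pow_le_prod_abs_sub {ι : Type*} [Fintype ι] [DecidableEq ι] {v : ι → ℝ}
    (hv : Function.Injective v) (hδ : 0 ≤ δ) (hsep : ∀ i j, i ≠ j → δ ≤ |v i - v j|) (k : ι) :
    paperZeta (Fintype.card ι) * δ ^ (Fintype.card ι - 1) ≤ ∏ i ∈ univ.erase k, |v k - v i| := by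
  rw [← prod_image (f := fun x => |v k - x|) hv.injOn, image_erase hv,
    ← Finset.card_univ, ← card_image_of_injective univ hv]
  refine paperZeta_mul_pow_le_prod_abs_sub_of_separated hδ _ ?_ (mem_image_of_mem v (mem_univ k))
  intro _ hx _ hy hxy
  obtain ⟨i, -, rfl⟩ := mem_image.mp hx
  obtain ⟨j, -, rfl⟩ := mem_image.mp hy
  exact hsep i j fun h => hxy (h ▸ rfl)

end SeparatedPoints

theorem abs_coeff_prod_X_sub_C_le {ι : Type*} [DecidableEq ι] (s : Finset ι) (v : ι → ℝ)
    (i : ℕ) : |(∏ j ∈ s, (X - C (v j))).coeff i| ≤ (∏ j ∈ s, (X + C |v j|)).coeff i := by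
  induction s using Finset.induction_on generalizing i with
  | empty => rw [prod_empty, prod_empty, coeff_one]; split_ifs <;> simp
  | insert a s ha ih =>
    rw [prod_insert ha, prod_insert ha]
    set q := ∏ j ∈ s, (X - C (v j))
    cases i with
    | zero =>
      simp only [mul_coeff_zero, coeff_sub, coeff_add, coeff_X_zero, coeff_C_zero, zero_sub,
        zero_add, neg_mul, abs_neg, abs_mul]
      exact mul_le_mul_of_nonneg_left (ih 0) (abs_nonneg _)
    | succ i =>
      simp only [sub_mul, add_mul, coeff_sub, coeff_add, coeff_X_mul, coeff_C_mul]
      calc _ ≤ |q.coeff i| + |v a| * |q.coeff (i + 1)| := by rw [← abs_mul]; exact abs_sub _ _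
        _ ≤ _ := add_le_add (ih i) (mul_le_mul_of_nonneg_left (ih (i + 1)) (abs_nonneg _))

theorem sum_abs_coeff_prod_X_sub_C_le {ι : Type*} [DecidableEq ι] (s : Finset ι) (v : ι → ℝ)
    {r : ℕ} (hr : s.card < r) :
    ∑ i : Fin r, |(∏ j ∈ s, (X - C (v j))).coeff i| ≤ ∏ j ∈ s, (1 + |v j|) := by
  have hdeg : (∏ j ∈ s, (X + C |v j|)).natDegree < r := by
    refine (natDegree_prod_le _ _).trans_lt ?_
    simpa using hr
  have hdom : ∑ i : Fin r, |(∏ j ∈ s, (X - C (v j))).coeff i| ≤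
      ∑ i : Fin r, (∏ j ∈ s, (X + C |v j|)).coeff i :=
    sum_le_sum fun i _ => abs_coeff_prod_X_sub_C_le s v i
  have heval : ∑ i : Fin r, (∏ j ∈ s, (X + C |v j|)).coeff i = ∏ j ∈ s, (1 + |v j|) := by
    have h := eval_eq_sum_range' hdeg 1
    simp only [one_pow, mul_one, eval_prod, eval_add, eval_X, eval_C] at h
    exact (Fin.sum_univ_eq_sum_range _ r).trans h.symm
  exact hdom.trans heval.le

theorem sum_coeff_mul_vandermonde_mulVec {R : Type*} [CommRing R] {r n : ℕ} (v : Fin n → R)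
    (c : Fin n → R) {p : R[X]} (hp : p.natDegree < r) :
    ∑ i : Fin r, p.coeff i * ((Matrix.of fun (i : Fin r) j => v j ^ (i : ℕ)) *ᵥ c) i =
      ∑ j, c j * p.eval (v j) := by
  simp only [Matrix.mulVec, dotProduct, Matrix.of_apply, mul_sum]
  rw [sum_comm]
  refine sum_congr rfl fun j _ => ?_
  rw [eval_eq_sum_range' hp, ← Fin.sum_univ_eq_sum_range, mul_sum]
  exact sum_congr rfl fun i _ => by ring

-- Pairing `D c` with the coefficients of `∏_{i ≠ k} (X - v_i)` isolates the `k`-th entry of `c`.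
theorem abs_mul_prod_abs_sub_le_mul_sqrt {s n : ℕ} (v : Fin n → ℝ) (hr : n ≤ (s - 1) / 2 + 1)
    (c : Fin n → ℝ) (k : Fin n) :
    |c k| * ∏ i ∈ univ.erase k, |v k - v i| ≤
      (∏ i ∈ univ.erase k, (1 + |v i|)) * √(vandD s n v *ᵥ c ⬝ᵥ vandD s n v *ᵥ c) := by
  set W := vandD s n v
  set p := ∏ i ∈ univ.erase k, (X - C (v i))
  have hcard : (univ.erase k).card < (s - 1) / 2 + 1 := by
    rw [card_erase_of_mem (mem_univ k), Finset.card_univ, Fintype.card_fin]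
    omega
  have hdeg : p.natDegree < (s - 1) / 2 + 1 :=
    (natDegree_prod_le _ _).trans_lt (by simpa using hcard)
  have hinterp : c k * ∏ i ∈ univ.erase k, (v k - v i) =
      ∑ i : Fin ((s - 1) / 2 + 1), p.coeff i * (W *ᵥ c) i := by
    refine Eq.trans ?_ (sum_coeff_mul_vandermonde_mulVec v c hdeg).symm
    rw [sum_eq_single k]
    · simp [p, eval_prod]
    · intro j _ hjk
      simp [p, eval_prod, prod_eq_zero (mem_erase.mpr ⟨hjk, mem_univ j⟩)]
    · simp
  have hrow : ∀ i, |(W *ᵥ c) i| ≤ √(W *ᵥ c ⬝ᵥ W *ᵥ c) := fun i =>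
    Real.abs_le_sqrt (by
      simpa [dotProduct, sq] using
        single_le_sum (fun j _ => mul_self_nonneg ((W *ᵥ c) j)) (mem_univ i))
  calc |c k| * ∏ i ∈ univ.erase k, |v k - v i|
        = |∑ i : Fin ((s - 1) / 2 + 1), p.coeff i * (W *ᵥ c) i| := by
        rw [← hinterp, abs_mul, abs_prod]
    _ ≤ ∑ i : Fin ((s - 1) / 2 + 1), |p.coeff i| * √(W *ᵥ c ⬝ᵥ W *ᵥ c) :=
        (abs_sum_le_sum_abs _ _).trans (sum_le_sum fun i _ => by
          rw [abs_mul]; exact mul_le_mul_of_nonneg_left (hrow i) (abs_nonneg _))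
    _ ≤ (∏ i ∈ univ.erase k, (1 + |v i|)) * √(W *ᵥ c ⬝ᵥ W *ᵥ c) := by
        rw [← sum_mul]
        exact mul_le_mul_of_nonneg_right (sum_abs_coeff_prod_X_sub_C_le _ v hcard)
          (Real.sqrt_nonneg _)

theorem paperZeta_sq_mul_pow_mul_dotProduct_le_vandD_mulVec {s n : ℕ} {v : Fin n → ℝ}
    (hv : Function.Injective v) {δ d : ℝ} (hδ : 0 ≤ δ) (hsep : ∀ i j, i ≠ j → δ ≤ |v i - v j|)
    (hd : ∀ j, |v j| ≤ d) (hr : n ≤ (s - 1) / 2 + 1) (c : Fin n → ℝ) :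
    paperZeta n ^ 2 * δ ^ (2 * n - 2) * (c ⬝ᵥ c) ≤
      n * (1 + d) ^ (2 * n - 2) * (vandD s n v *ᵥ c ⬝ᵥ vandD s n v *ᵥ c) := by
  set N := vandD s n v *ᵥ c ⬝ᵥ vandD s n v *ᵥ c
  have hN : √N ^ 2 = N := Real.sq_sqrt (sum_nonneg fun i _ => mul_self_nonneg _)
  have hcoord : ∀ k, |c k| * (paperZeta n * δ ^ (n - 1)) ≤ (1 + d) ^ (n - 1) * √N := by
    intro k
    calc |c k| * (paperZeta n * δ ^ (n - 1)) ≤ |c k| * ∏ i ∈ univ.erase k, |v k - v i| :=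
          mul_le_mul_of_nonneg_left (by simpa using paperZeta_mul_pow_le_prod_abs_sub hv hδ hsep k)
            (abs_nonneg _)
      _ ≤ (∏ i ∈ univ.erase k, (1 + |v i|)) * √N := abs_mul_prod_abs_sub_le_mul_sqrt v hr c k
      _ ≤ (1 + d) ^ (n - 1) * √N := by
          gcongr
          calc ∏ i ∈ univ.erase k, (1 + |v i|) ≤ ∏ i ∈ univ.erase k, (1 + d) :=
                prod_le_prod (fun i _ => by positivity) fun i _ => by linarith [hd i]
            _ = (1 + d) ^ (n - 1) := by simp
  have hexp : 2 * n - 2 = (n - 1) * 2 := by omega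
  calc paperZeta n ^ 2 * δ ^ (2 * n - 2) * (c ⬝ᵥ c)
      = ∑ k, (|c k| * (paperZeta n * δ ^ (n - 1))) ^ 2 := by
        simp only [dotProduct, mul_sum, mul_pow, sq_abs, hexp, pow_mul]
        exact sum_congr rfl fun k _ => by ring
    _ ≤ ∑ _k : Fin n, ((1 + d) ^ (n - 1) * √N) ^ 2 :=
        sum_le_sum fun k _ => pow_le_pow_left₀ (mul_nonneg (abs_nonneg _)
          (mul_nonneg (paperZeta_pos n).le (pow_nonneg hδ _))) (hcoord k) 2
    _ = n * (1 + d) ^ (2 * n - 2) * N := by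
        rw [sum_const, Finset.card_univ, Fintype.card_fin, nsmul_eq_mul, mul_pow, hN, hexp, pow_mul]
        ring

namespace Matrix

variable {m n R : Type*} [Fintype m] [Fintype n] [Field R] [LinearOrder R] [IsStrictOrderedRing R]

-- `range (Dᵀ D) = range Dᵀ` by a rank count, so `Dᵀ x = Dᵀ D c`; then `x - D c ∈ ker Dᵀ` is
-- orthogonal to both `x` and `D c`, hence zero.
theorem exists_mulVec_eq_of_forall_transpose_mulVec_eq_zero (D : Matrix m n R) {x : m → R}
    (hx : ∀ y, Dᵀ *ᵥ y = 0 → x ⬝ᵥ y = 0) : ∃ c, D *ᵥ c = x := by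
  have hrange : LinearMap.range (Dᵀ * D).mulVecLin = LinearMap.range Dᵀ.mulVecLin :=
    Submodule.eq_of_le_of_finrank_eq
      (by rw [mulVecLin_mul]; exact LinearMap.range_comp_le_range _ _)
      (by simpa only [rank] using (rank_transpose_mul_self D).trans (rank_transpose D).symm)
  obtain ⟨c, hc⟩ := hrange.ge (LinearMap.mem_range_self _ x)
  simp only [mulVecLin_apply, ← mulVec_mulVec] at hc
  refine ⟨c, ?_⟩
  set r := x - D *ᵥ c
  have hr : Dᵀ *ᵥ r = 0 := by rw [mulVec_sub, hc, sub_self]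
  have hrr : r ⬝ᵥ r = 0 := by
    rw [sub_dotProduct, hx r hr, ← vecMul_transpose, ← dotProduct_mulVec, hr, dotProduct_zero,
      sub_zero]
  exact (sub_eq_zero.mp (dotProduct_self_eq_zero.mp hrr)).symm

theorem sq_mul_le_dotProduct_mul_mul_transpose_mulVec (D : Matrix m n R) (A : Matrix n n R)
    {β μ : R} (hβ : 0 ≤ β) (hμ : 0 ≤ μ) (hD : ∀ c, β * (c ⬝ᵥ c) ≤ D *ᵥ c ⬝ᵥ D *ᵥ c)
    (hA : ∀ u, μ * (u ⬝ᵥ u) ≤ A *ᵥ u ⬝ᵥ A *ᵥ u) {x : m → R}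
    (hker : ∀ y, (D * A * Dᵀ) *ᵥ y = 0 → x ⬝ᵥ y = 0) (hx : x ⬝ᵥ x = 1) :
    β ^ 2 * μ ≤ (D * A * Dᵀ) *ᵥ x ⬝ᵥ (D * A * Dᵀ) *ᵥ x := by
  obtain ⟨c, rfl⟩ := D.exists_mulVec_eq_of_forall_transpose_mulVec_eq_zero fun y hy =>
    hker y (by rw [← mulVec_mulVec, hy, mulVec_zero])
  set u := Dᵀ *ᵥ D *ᵥ c
  have huu : 0 ≤ u ⬝ᵥ u := Finset.sum_nonneg fun _ _ => mul_self_nonneg _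
  have hβc : β * (c ⬝ᵥ c) ≤ 1 := hx ▸ hD c
  have huc : 1 ≤ (u ⬝ᵥ u) * (c ⬝ᵥ c) := by
    have hcs := Finset.sum_mul_sq_le_sq_mul_sq Finset.univ u c
    have h1 : u ⬝ᵥ c = 1 := by
      rw [← hx, dotProduct_comm, dotProduct_mulVec, vecMul_transpose]
    simp only [dotProduct, ← sq] at h1 hcs ⊢
    rwa [h1, one_pow] at hcs
  have hβu : β ≤ u ⬝ᵥ u :=
    calc β ≤ β * ((u ⬝ᵥ u) * (c ⬝ᵥ c)) := le_mul_of_one_le_right hβ huc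
      _ = (u ⬝ᵥ u) * (β * (c ⬝ᵥ c)) := by ring
      _ ≤ u ⬝ᵥ u := mul_le_of_le_one_right huu hβc
  calc β ^ 2 * μ = β * (μ * β) := by ring
    _ ≤ β * (μ * (u ⬝ᵥ u)) := by gcongr
    _ ≤ β * (A *ᵥ u ⬝ᵥ A *ᵥ u) := mul_le_mul_of_nonneg_left (hA u) hβ
    _ ≤ D *ᵥ A *ᵥ u ⬝ᵥ D *ᵥ A *ᵥ u := hD _
    _ = _ := by simp only [u, mulVec_mulVec, Matrix.mul_assoc]

theorem sq_mul_dotProduct_le_diagonal_mulVec_dotProduct [DecidableEq n] {a : n → R} {μ : R}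
    (hμ : 0 ≤ μ) (ha : ∀ j, μ ≤ |a j|) (u : n → R) :
    μ ^ 2 * (u ⬝ᵥ u) ≤ diagonal a *ᵥ u ⬝ᵥ diagonal a *ᵥ u := by
  simp only [dotProduct, mulVec_diagonal, Finset.mul_sum]
  refine Finset.sum_le_sum fun j _ => ?_
  have hμa : μ ^ 2 ≤ a j ^ 2 := sq_abs (a j) ▸ pow_le_pow_left₀ hμ (ha j) 2
  nlinarith [mul_self_nonneg (u j)]

end Matrix

/-- The singular value `σ_n` of `D·A·Dᵀ` is encoded as the minimum of `‖D·A·Dᵀ·x‖₂` over unit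
vectors `x` orthogonal to the kernel of `D·A·Dᵀ`. -/
theorem stmt_19_general (n : ℕ) (d : ℝ) (dstar : Fin n → ℝ)
    (hdist : Function.Injective dstar) (hin : ∀ j, -d ≤ dstar j ∧ dstar j ≤ d) (dmin : ℝ)
    (hdmin : IsLeast {x : ℝ | ∃ i j : Fin n, i ≠ j ∧ x = |dstar i - dstar j|} dmin)
    (m : ℝ) (hm : 0 < m) (astar : Fin n → ℝ) (ha : ∀ j, m ≤ |astar j|)
    (s : ℕ) (hs : 2 * n + 1 ≤ s)
    (x : Fin ((s - 1) / 2 + 1) → ℝ)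
    (hker : ∀ y : Fin ((s - 1) / 2 + 1) → ℝ,
      (vandD s n dstar * Matrix.diagonal astar * (vandD s n dstar)ᵀ).mulVec y = 0 →
        ∑ i, x i * y i = 0)
    (hunit : ∑ i, (x i) ^ 2 = 1) :
    Real.sqrt (∑ i,
        ((vandD s n dstar * Matrix.diagonal astar * (vandD s n dstar)ᵀ).mulVec x i) ^ 2) ≥
      m * paperZeta n ^ 2 * dmin ^ (2 * n - 2) / (n * (1 + d) ^ (2 * n - 2)) := by
  obtain ⟨⟨i₀, j₀, -, hdmin_eq⟩, hgap⟩ := hdmin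
  have hδ : 0 ≤ dmin := hdmin_eq ▸ abs_nonneg _
  have hd : ∀ j, |dstar j| ≤ d := fun j => abs_le.mpr (hin j)
  have hden : 0 < n * (1 + d) ^ (2 * n - 2) := by
    have : 0 < 1 + d := by linarith [abs_nonneg (dstar i₀), hd i₀]
    have : 0 < n := i₀.pos
    positivity
  set β := paperZeta n ^ 2 * dmin ^ (2 * n - 2) / (n * (1 + d) ^ (2 * n - 2))
  have hD (c : Fin n → ℝ) : β * (c ⬝ᵥ c) ≤ vandD s n dstar *ᵥ c ⬝ᵥ vandD s n dstar *ᵥ c := by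
    rw [div_mul_eq_mul_div, div_le_iff₀ hden, mul_comm _ (_ * _)]
    exact paperZeta_sq_mul_pow_mul_dotProduct_le_vandD_mulVec hdist hδ
      (fun i j hij => hgap ⟨i, j, hij, rfl⟩) hd (by omega) c
  have key := Matrix.sq_mul_le_dotProduct_mul_mul_transpose_mulVec _ _ (by positivity)
    (sq_nonneg m) hD (Matrix.sq_mul_dotProduct_le_diagonal_mulVec_dotProduct hm.le ha) hker
    (by simpa only [dotProduct, sq] using hunit)
  rw [ge_iff_le, mul_assoc, mul_div_assoc, mul_comm]
  calc β * m = √((β * m) ^ 2) := (Real.sqrt_sq (by positivity)).symm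
    _ ≤ _ := Real.sqrt_le_sqrt (by rw [mul_pow]; simpa only [dotProduct, sq] using key)

/-- The `n`-th largest singular value of `D·A·Dᵀ` (its smallest nonzero singular value,
characterized as the minimum of `‖D·A·Dᵀ·x‖₂` over Euclidean unit vectors `x` orthogonal to
the kernel of `D·A·Dᵀ`) is at least `m·ζ(n)²·(d*_min)^(2n−2)/(n·(1+d)^(2n−2))`. -/
theorem stmt_19 (n : ℕ) (hn : 2 ≤ n) (d : ℝ) (dstar : Fin n → ℝ)
    (hdist : Function.Injective dstar) (hin : ∀ j, -d ≤ dstar j ∧ dstar j ≤ d) (dmin : ℝ)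
    (hdmin : IsLeast {x : ℝ | ∃ i j : Fin n, i ≠ j ∧ x = |dstar i - dstar j|} dmin)
    (m : ℝ) (hm : 0 < m) (astar : Fin n → ℝ) (ha : ∀ j, m ≤ |astar j|)
    (s : ℕ) (hodd : Odd s) (hs : 2 * n + 1 ≤ s)
    (x : Fin ((s - 1) / 2 + 1) → ℝ)
    (hker : ∀ y : Fin ((s - 1) / 2 + 1) → ℝ,
      (vandD s n dstar * Matrix.diagonal astar * (vandD s n dstar)ᵀ).mulVec y = 0 →
        ∑ i, x i * y i = 0)
    (hunit : ∑ i, (x i) ^ 2 = 1) :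
    Real.sqrt (∑ i,
        ((vandD s n dstar * Matrix.diagonal astar * (vandD s n dstar)ᵀ).mulVec x i) ^ 2) ≥
      m * paperZeta n ^ 2 * dmin ^ (2 * n - 2) / (n * (1 + d) ^ (2 * n - 2)) :=
  stmt_19_general n d dstar hdist hin dmin hdmin m hm astar ha s hs x hker hunit
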